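/- arXiv:2101.08880 — 2 statements merged into one kernel-verified Lean document; each statement's English description precedes it below -/
import Mathlib

section
/- Correctness of the 3SAT-to-controller-synthesis reduction for ∀∀ HyperLTL on trees: Let y = y₁ ∧ … ∧ y_m be a 3CNF formula over variables x₁,…,xₙ, and let P be the tree-shaped plant with initial state s_init, uncontrollable transitions from s_init to clause states r₁,…,r_m, and for each clause y_j three controllable branches (one per literal) of length n whose i-th state is labeled pos if the branch's literal is x_i and neg if it is ¬x_i (unlabeled otherwise), ending in self-loops. Then y is satisfiable if and only if there exists a sub-plant P' of P obtained by removing only controllable transitions (keeping all uncontrollable transitions, all states reachable, and totality of the transition relation) such that every pair of traces π₁, π₂ of P' satisfies □(¬pos_{π₁} ∨ ¬neg_{π₂}). -/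
namespace ThreeSat

/-- States of the tree-shaped plant for a 3CNF formula with `m` clauses over
`n` variables: the initial state, one state per clause, and per clause three
branches (one per literal) of `n` states each. -/
inductive St (m n : ℕ) : Type
  | init : St m n
  | clause : Fin m → St m n
  | node : Fin m → Fin 3 → Fin n → St m n

variable {m n : ℕ}

/-- Uncontrollable transitions: from the initial state to each clause state. -/
def uRel : St m n → St m n → Prop
  | .init, .clause _ => True
  | _, _ => False

/-- Controllable transitions: from a clause state to the first node of each of
its three branches, along each branch, and the self-loop at the last node. -/
def cRel : St m n → St m n → Prop
  | .clause j, .node j' _ i => j = j' ∧ (i : ℕ) = 0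
  | .node j b i, .node j' b' i' =>
      j = j' ∧ b = b' ∧
        ((i : ℕ) + 1 = (i' : ℕ) ∨ ((i : ℕ) = n - 1 ∧ i = i'))
  | _, _ => False

/-- Labels over `AP = {pos, neg}` (encoded as `Bool`, `true` = pos, `false` =
neg): the `i`-th node of the branch of clause `j` for its `b`-th literal is
labeled `pos` if that literal is `x_i` and `neg` if it is `¬x_i`. -/
def label (y : Fin m → Fin 3 → Fin n × Bool) : St m n → Set Bool
  | .node j b i => {a | (y j b).1 = i ∧ (y j b).2 = a}
  | _ => ∅

/-- The traces of the plant with transition relation `δ`. -/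
def traces (y : Fin m → Fin 3 → Fin n × Bool) (δ : St m n → St m n → Prop) :
    Set (ℕ → Set Bool) :=
  {t | ∃ p : ℕ → St m n, p 0 = St.init ∧ (∀ i, δ (p i) (p (i + 1))) ∧
        ∀ i, t i = label y (p i)}

/-- index of the node visited at step `k+2` of any run. -/
def idx (hn : 0 < n) (k : ℕ) : Fin n := ⟨min k (n-1), by omega⟩

def goodC (bf : Fin m → Fin 3) : St m n → St m n → Prop
  | .clause j, .node j' b i => j = j' ∧ b = bf j ∧ (i:ℕ) = 0
  | .node j b i, .node j' b' i' => cRel (.node j b i) (.node j' b' i')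
  | _, _ => False

lemma cRel_from_node {j b} {i : Fin n} {t : St m n}
    (h : cRel (St.node j b i) t) :
    ∃ i' : Fin n, (i' : ℕ) = min ((i:ℕ)+1) (n-1) ∧ t = St.node j b i' := by
  cases t with
  | node j' b' i' =>
      obtain ⟨hj, hb, hi⟩ := h
      subst hj; subst hb
      refine ⟨i', ?_, rfl⟩
      have h1 := i'.isLt
      have h2 := i.isLt
      rcases hi with h | ⟨ha, hb2⟩
      · omega
      · have := congrArg Fin.val hb2; omega
  | init => exact h.elim
  | clause _ => exact h.elim

lemma cRel_from_clause (hn : 0 < n) {j} {t : St m n} (h : cRel (St.clause j) t) :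
    ∃ b, t = St.node j b ⟨0, hn⟩ := by
  cases t with
  | node j' b i =>
      obtain ⟨hj, hi⟩ := h
      subst hj
      exact ⟨b, by rw [show i = (⟨0, hn⟩ : Fin n) from Fin.ext hi]⟩
  | init => exact h.elim
  | clause _ => exact h.elim

lemma goodC_sub (bf : Fin m → Fin 3) : ∀ s t : St m n, goodC bf s t → cRel s t := by
  intro s t h
  cases s <;> cases t <;> first
    | exact h.elim
    | exact h
    | (obtain ⟨h1, h2, h3⟩ := h; exact ⟨h1, h3⟩)

lemma goodC_total (hm : 0 < m) (hn : 0 < n) (bf : Fin m → Fin 3) :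
    ∀ s : St m n, ∃ t, goodC bf s t ∨ uRel s t := by
  intro s
  cases s with
  | init => exact ⟨.clause ⟨0, hm⟩, Or.inr trivial⟩
  | clause j => exact ⟨.node j (bf j) ⟨0, hn⟩, Or.inl ⟨rfl, rfl, rfl⟩⟩
  | node j b i =>
      refine ⟨.node j b ⟨min ((i:ℕ)+1) (n-1), by have := i.isLt; omega⟩, Or.inl ?_⟩
      refine ⟨rfl, rfl, ?_⟩
      have hi := i.isLt
      by_cases h : (i:ℕ)+1 < n
      · left; simp; omega
      · right
        refine ⟨by omega, ?_⟩
        apply Fin.ext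
        simp; omega

lemma forward_struct (hn : 0 < n) (bf : Fin m → Fin 3) (p : ℕ → St m n)
    (h0 : p 0 = .init)
    (hs : ∀ i, goodC bf (p i) (p (i+1)) ∨ uRel (p i) (p (i+1))) :
    (∃ j, p 1 = .clause j) ∧ ∀ k, ∃ j, p (k+2) = .node j (bf j) (idx hn k) := by
  have h1 : ∃ j, p 1 = St.clause j := by
    have h : goodC bf St.init (p 1) ∨ uRel St.init (p 1) := by
      rw [← h0]; exact hs 0
    cases hp : p 1 with
    | clause j => exact ⟨j, rfl⟩
    | init => rw [hp] at h; rcases h with h | h <;> exact h.elim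
    | node j b i => rw [hp] at h; rcases h with h | h <;> exact h.elim
  obtain ⟨j₁, hj₁⟩ := h1
  refine ⟨⟨j₁, hj₁⟩, ?_⟩
  intro k
  induction k with
  | zero =>
      have h : goodC bf (St.clause j₁) (p 2) ∨ uRel (St.clause j₁) (p 2) := by
        rw [← hj₁]; exact hs 1
      cases hp : p 2 with
      | init => rw [hp] at h; rcases h with h | h <;> exact h.elim
      | clause j => rw [hp] at h; rcases h with h | h <;> exact h.elim
      | node j b i =>
          rw [hp] at h
          rcases h with ⟨hj, hb, hi⟩ | h
          · subst hj; subst hb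
            refine ⟨j₁, ?_⟩
            congr 1
            apply Fin.ext
            simp [idx]; omega
          · exact h.elim
  | succ k ih =>
      obtain ⟨j, hj⟩ := ih
      have h : goodC bf (St.node j (bf j) (idx hn k)) (p (k+3)) ∨
          uRel (St.node j (bf j) (idx hn k)) (p (k+3)) := by
        rw [← hj]
        exact hs (k+2)
      rcases h with h | h
      · cases hp : p (k+3) with
        | init => rw [hp] at h; exact h.elim
        | clause j' => rw [hp] at h; exact h.elim
        | node j' b' i' =>
            rw [hp] at h
            have h' : cRel (St.node j (bf j) (idx hn k)) (St.node j' b' i') := h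
            obtain ⟨i'', hi'', heq⟩ := cRel_from_node h'
            refine ⟨j, ?_⟩
            rw [heq]
            congr 1
            apply Fin.ext
            have := (idx hn k).isLt
            simp [idx] at hi'' ⊢
            omega
      · cases hp : p (k+3) with
        | init => rw [hp] at h; exact h.elim
        | clause j' => rw [hp] at h; exact h.elim
        | node j' b' i' => rw [hp] at h; exact h.elim

def pth (hn : 0 < n) (B : Fin m → Fin 3) (j : Fin m) : ℕ → St m n
  | 0 => .init
  | 1 => .clause j
  | (k+2) => .node j (B j) (idx hn k)

/-- Correctness of the 3SAT-to-controller-synthesis reduction for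
`∀∀` HyperLTL on trees: a 3CNF formula `y` (clause `j`'s `b`-th literal is
`x_{(y j b).1}` if `(y j b).2 = true` and its negation otherwise) is
satisfiable iff some sub-plant obtained by removing only controllable
transitions (keeping all uncontrollable transitions and totality) satisfies
`∀π₁.∀π₂. □(¬pos_{π₁} ∨ ¬neg_{π₂})`. -/
theorem threesat_reduction (hm : 0 < m) (hn : 0 < n)
    (y : Fin m → Fin 3 → Fin n × Bool) :
    (∃ v : Fin n → Bool, ∀ j : Fin m, ∃ b : Fin 3, v (y j b).1 = (y j b).2) ↔
      ∃ c' : St m n → St m n → Prop,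
        (∀ s t, c' s t → cRel s t) ∧
        (∀ s : St m n, ∃ t, c' s t ∨ uRel s t) ∧
        (∀ t₁ ∈ traces y (fun a b => c' a b ∨ uRel a b),
          ∀ t₂ ∈ traces y (fun a b => c' a b ∨ uRel a b),
            ∀ i : ℕ, ¬(true ∈ t₁ i ∧ false ∈ t₂ i)) := by
  constructor
  · rintro ⟨v, hv⟩
    choose bf hbf using hv
    refine ⟨goodC bf, goodC_sub bf, goodC_total hm hn bf, ?_⟩
    rintro t₁ ⟨p₁, hp10, hp1s, hp1l⟩ t₂ ⟨p₂, hp20, hp2s, hp2l⟩ k ⟨hk1, hk2⟩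
    obtain ⟨⟨ja, hja⟩, hst1⟩ := forward_struct hn bf p₁ hp10 hp1s
    obtain ⟨⟨jb, hjb⟩, hst2⟩ := forward_struct hn bf p₂ hp20 hp2s
    rw [hp1l k] at hk1
    rw [hp2l k] at hk2
    match k with
    | 0 =>
        rw [hp10] at hk1
        exact absurd hk1 (Set.notMem_empty _)
    | 1 =>
        rw [hja] at hk1
        exact absurd hk1 (Set.notMem_empty _)
    | (k+2) =>
        obtain ⟨j₁, hj1⟩ := hst1 k
        obtain ⟨j₂, hj2⟩ := hst2 k
        rw [hj1] at hk1
        rw [hj2] at hk2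
        obtain ⟨ha1, ha2⟩ := hk1
        obtain ⟨hb1, hb2⟩ := hk2
        have e1 := hbf j₁
        have e2 := hbf j₂
        rw [ha1, ha2] at e1
        rw [hb1, hb2] at e2
        rw [e1] at e2
        exact Bool.noConfusion e2
  · rintro ⟨c', hsub, htot, hsat⟩
    have hB : ∀ j : Fin m, ∃ b, c' (St.clause j) (St.node j b ⟨0, hn⟩) := by
      intro j
      obtain ⟨t, ht | ht⟩ := htot (St.clause j)
      · obtain ⟨b, rfl⟩ := cRel_from_clause hn (hsub _ _ ht)
        exact ⟨b, ht⟩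
      · cases t <;> exact ht.elim
    choose B hBc using hB
    have htr : ∀ j, (fun i => label y (pth hn B j i)) ∈
        traces y (fun a b => c' a b ∨ uRel a b) := by
      intro j
      refine ⟨pth hn B j, rfl, ?_, fun i => rfl⟩
      intro k
      match k with
      | 0 => exact Or.inr trivial
      | 1 =>
          left
          have : idx hn 0 = (⟨0, hn⟩ : Fin n) := Fin.ext (by simp [idx])
          show c' (St.clause j) (St.node j (B j) (idx hn 0))
          rw [this]
          exact hBc j
      | (k+2) =>
          obtain ⟨t, ht | ht⟩ := htot (St.node j (B j) (idx hn k))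
          · obtain ⟨i', hi', rfl⟩ := cRel_from_node (hsub _ _ ht)
            left
            have hieq : i' = idx hn (k+1) := by
              apply Fin.ext
              have := (idx hn k).isLt
              simp [idx] at hi' ⊢
              omega
            rw [hieq] at ht
            exact ht
          · cases t <;> exact ht.elim
    classical
    refine ⟨fun x => if ∃ j, (y j (B j)).1 = x ∧ (y j (B j)).2 = true
      then true else false, ?_⟩
    intro j
    refine ⟨B j, ?_⟩
    cases hyb : (y j (B j)).2 with
    | true =>
        show (if ∃ j', (y j' (B j')).1 = (y j (B j)).1 ∧ (y j' (B j')).2 = true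
          then true else false) = true
        rw [if_pos ⟨j, rfl, hyb⟩]
    | false =>
        have hx0 : ¬ ∃ j', (y j' (B j')).1 = (y j (B j)).1 ∧ (y j' (B j')).2 = true := by
          rintro ⟨j', hx, ht⟩
          set x := (y j (B j)).1 with hxdef
          apply hsat _ (htr j') _ (htr j) ((x : ℕ) + 2)
          have hxi : idx hn (x : ℕ) = x := by
            apply Fin.ext
            have := x.isLt
            simp [idx]; omega
          constructor
          · show true ∈ label y (St.node j' (B j') (idx hn (x:ℕ)))
            rw [hxi]
            exact ⟨hx, ht⟩
          · show false ∈ label y (St.node j (B j) (idx hn (x:ℕ)))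
            rw [hxi]
            exact ⟨rfl, hyb⟩
        show (if ∃ j', (y j' (B j')).1 = (y j (B j)).1 ∧ (y j' (B j')).2 = true
          then true else false) = false
        rw [if_neg hx0]


end ThreeSat
end

section
/- If every one of the disjoint sets assigned to positions encodes a consistent partial assignment (each position i is marked pos in some selected branch only if x_i is set true, and neg only if x_i is set false), and every clause state r_j retains at least one branch whose literal is satisfied by the assignment, then the resulting set of traces satisfies ∀π₁∀π₂.□(¬pos_{π₁} ∨ ¬neg_{π₂}); conversely from any trace set satisfying this formula in which each clause has at least one surviving branch, one can extract an assignment (set x_i true iff some surviving branch is labeled pos at position i) satisfying all clauses. -/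
namespace ThreeSat

variable {m n : ℕ}

/-- The candidate trace for the `b`-th literal of clause `j` of a 3CNF formula
`y` (literal `x_{(y j b).1}` if `(y j b).2 = true`, else its negation): over
`AP = {pos, neg}` encoded as `Bool` (`true` = pos, `false` = neg), position `i`
contains `pos` iff the literal is `x_i` and `neg` iff it is `¬x_i`. -/
def tr (y : Fin m → Fin 3 → Fin n × Bool) (j : Fin m) (b : Fin 3) :
    ℕ → Set Bool :=
  fun i => {a | ((y j b).1 : ℕ) = i ∧ (y j b).2 = a}

/-- (⇒) If each selected branch's mark is consistent with an
assignment `v` (pos at `i` only if `x_i` is true, neg only if `x_i` is false)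
and every clause retains a branch whose literal `v` satisfies, then the
selected traces satisfy `∀π₁∀π₂.□(¬pos_{π₁} ∨ ¬neg_{π₂})`.
(⇐) Conversely, from any selection with at least one surviving branch per
clause whose traces satisfy that formula, the assignment "`x_i` true iff some
surviving branch is labeled pos at position `i`" satisfies all clauses. -/
theorem selection_correctness (y : Fin m → Fin 3 → Fin n × Bool) :
    (∀ (v : Fin n → Bool) (sel : Fin m → Fin 3 → Prop),
      (∀ j b, sel j b → v (y j b).1 = (y j b).2) →
      (∀ j, ∃ b, sel j b ∧ v (y j b).1 = (y j b).2) →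
      ∀ j b j' b', sel j b → sel j' b' →
        ∀ i : ℕ, ¬(true ∈ tr y j b i ∧ false ∈ tr y j' b' i)) ∧
    (∀ sel : Fin m → Fin 3 → Prop,
      (∀ j, ∃ b, sel j b) →
      (∀ j b j' b', sel j b → sel j' b' →
        ∀ i : ℕ, ¬(true ∈ tr y j b i ∧ false ∈ tr y j' b' i)) →
      ∀ j : Fin m, ∃ b : Fin 3,
        (((y j b).2 = true ∧ (∃ j' b', sel j' b' ∧ y j' b' = ((y j b).1, true))) ∨
         ((y j b).2 = false ∧ ¬(∃ j' b', sel j' b' ∧ y j' b' = ((y j b).1, true))))) := by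
  constructor
  · intro v sel hcons _ j b j' b' hs hs' i ⟨⟨hi1, ht⟩, ⟨hi2, hf⟩⟩
    have hv := hcons j b hs
    have hv' := hcons j' b' hs'
    have : (y j b).1 = (y j' b').1 := Fin.ext (hi1.trans hi2.symm)
    rw [ht] at hv
    rw [hf, ← this, hv] at hv'
    exact absurd hv' (by simp)
  · intro sel hsel hcond j
    obtain ⟨b, hb⟩ := hsel j
    refine ⟨b, ?_⟩
    cases hval : (y j b).2 with
    | true =>
      exact Or.inl ⟨rfl, j, b, hb, Prod.ext rfl hval⟩
    | false =>
      refine Or.inr ⟨rfl, ?_⟩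
      rintro ⟨j', b', hs', heq⟩
      exact hcond j' b' j b hs' hb ((y j b).1 : ℕ)
        ⟨⟨by rw [heq], by rw [heq]⟩, rfl, hval⟩

end ThreeSat
end
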